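/- arXiv:2603.17954 — 2 statements merged into one kernel-verified Lean document; each statement's English description precedes it below -/
import Mathlib

section
/- If ρ is monotone decreasing and the family U is c-quasi-convex (U_{λX+(1-λ)Y} ⊆ (U_X ∪ U_Y) + E_+ for all X, Y, λ ∈ [0,1]), then the robust risk measure ρ̃(X) = sup_{Z ∈ U_X} ρ(Z) is quasi-convex: ρ̃(λX+(1-λ)Y) ≤ max{ρ̃(X), ρ̃(Y)}. -/
open Set Pointwise

theorem Antitone.biSup_add_nonneg_eq {E β : Type*} [AddCommMonoid E] [PartialOrder E]
    [IsOrderedAddMonoid E] [CompleteLattice β] {ρ : E → β} (hρ : Antitone ρ) (A : Set E) :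
    ⨆ Z ∈ A + {K : E | 0 ≤ K}, ρ Z = ⨆ Z ∈ A, ρ Z := by
  refine le_antisymm (iSup₂_le ?_) (biSup_mono fun W hW => ⟨W, hW, 0, le_rfl, add_zero W⟩)
  rintro _ ⟨W, hW, K, hK, rfl⟩
  exact (hρ (le_add_of_nonneg_right hK)).trans (le_iSup₂_of_le W hW le_rfl)

theorem stmt5 {E : Type*} [AddCommGroup E] [PartialOrder E] [IsOrderedAddMonoid E] [Module ℝ E] (ρ : E → EReal)
    (hρ : ∀ X Y : E, X ≤ Y → ρ Y ≤ ρ X)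
    (U : E → Set E)
    (hU : ∀ (X Y : E) (l : ℝ), 0 ≤ l → l ≤ 1 →
      U (l • X + (1 - l) • Y) ⊆ (U X ∪ U Y) + {K : E | 0 ≤ K}) :
    ∀ (X Y : E) (l : ℝ), 0 ≤ l → l ≤ 1 →
      (⨆ Z ∈ U (l • X + (1 - l) • Y), ρ Z) ≤
        max (⨆ Z ∈ U X, ρ Z) (⨆ Z ∈ U Y, ρ Z) := by
  intro X Y l hl₀ hl₁
  calc ⨆ Z ∈ U (l • X + (1 - l) • Y), ρ Z
      ≤ ⨆ Z ∈ (U X ∪ U Y) + {K : E | 0 ≤ K}, ρ Z := biSup_mono (hU X Y l hl₀ hl₁)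
    _ = ⨆ Z ∈ U X ∪ U Y, ρ Z := Antitone.biSup_add_nonneg_eq hρ _
    _ = max (⨆ Z ∈ U X, ρ Z) (⨆ Z ∈ U Y, ρ Z) := iSup_union
end

section
/- If ρ is quasi-convex and the family U is convex (U_{λX+(1-λ)Y} ⊆ λU_X + (1-λ)U_Y for all X, Y, λ ∈ [0,1]), then the robust risk measure ρ̃(X) = sup_{Z ∈ U_X} ρ(Z) is quasi-convex: ρ̃(λX+(1-λ)Y) ≤ max{ρ̃(X), ρ̃(Y)}. -/
open Set

theorem stmt6 {E : Type*} [AddCommGroup E] [Module ℝ E] (ρ : E → EReal)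
    (hρ : ∀ (X Y : E) (l : ℝ), 0 ≤ l → l ≤ 1 →
      ρ (l • X + (1 - l) • Y) ≤ max (ρ X) (ρ Y))
    (U : E → Set E)
    (hU : ∀ (X Y : E) (l : ℝ), 0 ≤ l → l ≤ 1 →
      U (l • X + (1 - l) • Y) ⊆
        {W | ∃ Z₁ ∈ U X, ∃ Z₂ ∈ U Y, W = l • Z₁ + (1 - l) • Z₂}) :
    ∀ (X Y : E) (l : ℝ), 0 ≤ l → l ≤ 1 →
      (⨆ Z ∈ U (l • X + (1 - l) • Y), ρ Z) ≤
        max (⨆ Z ∈ U X, ρ Z) (⨆ Z ∈ U Y, ρ Z) := by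
  intro X Y l hl0 hl1
  refine iSup₂_le fun W hW => ?_
  obtain ⟨Z₁, hZ₁, Z₂, hZ₂, rfl⟩ := hU X Y l hl0 hl1 hW
  calc ρ (l • Z₁ + (1 - l) • Z₂) ≤ max (ρ Z₁) (ρ Z₂) := hρ Z₁ Z₂ l hl0 hl1
    _ ≤ max (⨆ Z ∈ U X, ρ Z) (⨆ Z ∈ U Y, ρ Z) :=
      max_le_max (le_iSup₂ (f := fun Z _ => ρ Z) Z₁ hZ₁)
        (le_iSup₂ (f := fun Z _ => ρ Z) Z₂ hZ₂)
end
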